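/- arXiv:1209.3291 — 2 statements merged into one kernel-verified Lean document; each statement's English description precedes it below -/
import Mathlib

section
/- Let q ∈ ℝ \ {0} and define, on the space C(P) of complex-valued functions on the weight lattice, the operator T̂ = q + χ·(s − 1), where s is a reflection acting on P, and χ(λ) takes the value q if the reflection hyperplane separates λ from the fundamental alcove, 1 if λ lies on the hyperplane, and q⁻¹ otherwise. Then T̂ satisfies the quadratic Hecke relation (T̂ − q)(T̂ + q⁻¹) = 0. -/
noncomputable section

/-- The difference-reflection operator `T̂ = q + χ(s − 1)` on functions on the weight lattice:
`(T̂f)(λ) = q f(λ) + χ(λ)(f(sλ) − f(λ))`. -/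
def That {P : Type*} (q : ℝ) (s : P → P) (χ : P → ℝ) (f : P → ℂ) : P → ℂ :=
  fun lam => (q : ℂ) * f lam + (χ lam : ℂ) * (f (s lam) - f lam)

/-
`T̂ - q` kills the image of `T̂ + q⁻¹`. Indeed `(T̂f)(λ) - q f(λ) = χ(λ)(f(sλ) - f(λ))`, so `T̂ - q`
kills every `s`-invariant function, and `g = (T̂ + q⁻¹) f` is `s`-invariant: using `s² = 1`,
`g(sλ) - g(λ) = (q + q⁻¹ - χ(λ) - χ(sλ)) (f(sλ) - f(λ))`, and off the hyperplane
`χ(λ) + χ(sλ) = χ(λ) + χ(λ)⁻¹ = q + q⁻¹` because `χ(λ) ∈ {q, q⁻¹}`.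
-/

lemma add_inv_eq_add_inv_of_eq_or_eq_inv {K : Type*} [DivisionRing K] {x q : K}
    (h : x = q ∨ x = q⁻¹) : x + x⁻¹ = q + q⁻¹ := by
  rcases h with rfl | rfl
  · rfl
  · rw [inv_inv, add_comm]

section HeckeOperator

variable {P : Type*} (q : ℝ) (s : P → P) (χ : P → ℝ)

lemma That_apply_sub_mul (f : P → ℂ) (lam : P) :
    That q s χ f lam - q * f lam = χ lam * (f (s lam) - f lam) := by
  simp only [That, add_sub_cancel_left]

lemma That_apply_eq_mul_of_apply_eq {f : P → ℂ} {lam : P} (h : f (s lam) = f lam) :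
    That q s χ f lam = q * f lam := by
  rw [← sub_eq_zero, That_apply_sub_mul, h, sub_self, mul_zero]

lemma That_add_inv_mul_apply_eq {f : P → ℂ} {lam : P} (hs : s (s lam) = lam)
    (hχ : s lam ≠ lam → χ lam + χ (s lam) = q + q⁻¹) :
    That q s χ f (s lam) + (q : ℂ)⁻¹ * f (s lam) = That q s χ f lam + (q : ℂ)⁻¹ * f lam := by
  by_cases hfix : s lam = lam
  · rw [hfix]
  have hχC : (χ lam : ℂ) + χ (s lam) = q + (q : ℂ)⁻¹ := by exact_mod_cast hχ hfix
  rw [← sub_eq_zero]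
  calc That q s χ f (s lam) + (q : ℂ)⁻¹ * f (s lam) - (That q s χ f lam + (q : ℂ)⁻¹ * f lam)
      = (q + (q : ℂ)⁻¹ - (χ lam + χ (s lam))) * (f (s lam) - f lam) := by
        simp only [That, hs]
        ring
    _ = 0 := by rw [hχC, sub_self, zero_mul]

end HeckeOperator

theorem statement2_general {P : Type*} (q : ℝ)
    (s : P → P) (hs : Function.Involutive s) (χ : P → ℝ)
    (hχ_off : ∀ lam : P, s lam ≠ lam →
      (χ lam = q ∨ χ lam = q⁻¹) ∧ χ (s lam) = (χ lam)⁻¹) :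
    ∀ (f : P → ℂ) (lam : P),
      That q s χ (fun mu => That q s χ f mu + (q : ℂ)⁻¹ * f mu) lam -
        (q : ℂ) * (That q s χ f lam + (q : ℂ)⁻¹ * f lam) = 0 := by
  intro f lam
  have hχ : s lam ≠ lam → χ lam + χ (s lam) = q + q⁻¹ := fun hfix => by
    obtain ⟨hval, hinv⟩ := hχ_off lam hfix
    rw [hinv]
    exact add_inv_eq_add_inv_of_eq_or_eq_inv hval
  rw [sub_eq_zero]
  exact That_apply_eq_mul_of_apply_eq q s χ (That_add_inv_mul_apply_eq q s χ (hs lam) hχ)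

/-- Let `q ∈ ℝ \ {0}` and let `T̂ = q + χ(s − 1)` on the space of complex
functions on the weight lattice `P`, where `s` is an (affine simple) reflection acting on `P` and
`χ(λ)` equals `q` if the reflection hyperplane separates `λ` from the fundamental alcove, `1` if
`λ` lies on the hyperplane (equivalently, is fixed by `s`), and `q⁻¹` otherwise (so that
`χ(sλ) = χ(λ)⁻¹` off the hyperplane). Then `T̂` satisfies the quadratic Hecke relation
`(T̂ − q)(T̂ + q⁻¹) = 0`. -/
theorem statement2 {P : Type*} (q : ℝ) (hq : q ≠ 0)
    (s : P → P) (hs : Function.Involutive s) (χ : P → ℝ)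
    (hχ_fix : ∀ lam : P, s lam = lam → χ lam = 1)
    (hχ_off : ∀ lam : P, s lam ≠ lam →
      (χ lam = q ∨ χ lam = q⁻¹) ∧ χ (s lam) = (χ lam)⁻¹) :
    ∀ (f : P → ℂ) (lam : P),
      That q s χ (fun mu => That q s χ f mu + (q : ℂ)⁻¹ * f mu) lam -
        (q : ℂ) * (That q s χ f lam + (q : ℂ)⁻¹ * f lam) = 0 :=
  statement2_general q s hs χ hχ_off
end
end

section
/- The discrete integral-reflection operator J_j satisfies J_j t_λ = t_λ J_j if ⟨λ,α_j∨⟩ = 0, and J_j t_λ = t_{s_jλ} J_j + t_λ if ⟨λ,α_j∨⟩ = 1, as operators on functions on the weight lattice; consequently I_j t_λ = t_λ I_j in the first case and I_j t_λ = t_{s_jλ} I_j + (q_j − q_j⁻¹) t_λ in the second case. -/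
noncomputable section

def Jop {P : Type*} [AddCommGroup P] (αj : P) (m : P →+ ℤ) (f : P → ℂ) (mu : P) : ℂ :=
  if 0 < m mu then
    -∑ l ∈ Finset.range (m mu).toNat, f (mu - ((l : ℤ) + 1) • αj)
  else if m mu = 0 then 0
  else ∑ l ∈ Finset.range (-(m mu)).toNat, f (mu + (l : ℤ) • αj)

def Iop {P : Type*} [AddCommGroup P] (qj : ℂ) (αj : P) (m : P →+ ℤ) (f : P → ℂ) (mu : P) : ℂ :=
  qj * f (mu - m mu • αj) + (qj - qj⁻¹) * Jop αj m f mu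

lemma jop_t0 {P : Type*} [AddCommGroup P] (αj : P) (m : P →+ ℤ) (lam : P) (h : m lam = 0)
    (f : P → ℂ) (mu : P) :
    Jop αj m (fun ν => f (ν - lam)) mu = Jop αj m f (mu - lam) := by
  have hmm : m (mu - lam) = m mu := by simp [map_sub, h]
  unfold Jop
  rw [hmm]
  split_ifs with h1 h2
  · congr 1
    refine Finset.sum_congr rfl fun l _ => ?_
    exact congrArg f (by abel)
  · rfl
  · refine Finset.sum_congr rfl fun l _ => ?_
    exact congrArg f (by abel)

lemma jop_t1 {P : Type*} [AddCommGroup P] (αj : P) (m : P →+ ℤ) (hm : m αj = 2)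
    (lam : P) (h : m lam = 1) (f : P → ℂ) (mu : P) :
    Jop αj m (fun ν => f (ν - lam)) mu = Jop αj m f (mu - lam + αj) + f (mu - lam) := by
  have hmm : m (mu - lam + αj) = m mu + 1 := by simp [map_sub, map_add, h, hm]; ring
  unfold Jop
  rw [hmm]
  rcases lt_trichotomy (m mu) 0 with hn | hn | hn
  · -- m mu < 0
    rw [if_neg (by omega), if_neg (by omega)]
    rcases eq_or_lt_of_le (Int.add_one_le_iff.mpr hn) with h1 | h1
    · -- m mu = -1
      rw [if_neg (by omega), if_pos (by omega)]
      have : (-(m mu)).toNat = 1 := by omega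
      rw [this]
      simp
    · -- m mu < -1
      rw [if_neg (by omega), if_neg (by omega)]
      have hk : (-(m mu)).toNat = (-(m mu + 1)).toNat + 1 := by omega
      rw [hk, Finset.sum_range_succ']
      congr 1
      · refine Finset.sum_congr rfl fun l _ => ?_
        refine congrArg f ?_
        push_cast
        rw [add_smul, one_smul]
        abel
      · simp
  · -- m mu = 0
    rw [if_neg (by omega), if_pos hn, if_pos (by omega)]
    have : (m mu + 1).toNat = 1 := by omega
    rw [this]
    simp [hn]
  · -- m mu > 0
    rw [if_pos hn, if_pos (by omega)]
    have hk : (m mu + 1).toNat = (m mu).toNat + 1 := by omega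
    rw [hk, Finset.sum_range_succ']
    have h0 : mu - lam + αj - ((0:ℕ) + 1 : ℤ) • αj = mu - lam := by
      push_cast; rw [one_smul]; abel
    rw [h0]
    have hsum : ∀ l ∈ Finset.range (m mu).toNat,
        f (mu - lam + αj - (((l + 1 : ℕ) : ℤ) + 1) • αj) = f (mu - ((l : ℤ) + 1) • αj - lam) := by
      intro l _
      refine congrArg f ?_
      push_cast
      rw [show ((l : ℤ) + 1 + 1) • αj = ((l : ℤ) + 1) • αj + (1:ℤ) • αj by rw [← add_smul]]
      rw [one_smul]
      abel
    rw [Finset.sum_congr rfl hsum]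
    ring

/-- As operators on functions on the weight lattice (with `(t_λf)(μ) = f(μ−λ)`):
`J_j t_λ = t_λ J_j` if `⟨λ,α_j∨⟩ = 0`, and `J_j t_λ = t_{s_jλ} J_j + t_λ` if `⟨λ,α_j∨⟩ = 1`;
consequently `I_j t_λ = t_λ I_j` in the first case and
`I_j t_λ = t_{s_jλ} I_j + (q_j − q_j⁻¹) t_λ` in the second case. -/
theorem statement17 {P : Type*} [AddCommGroup P] (αj : P) (m : P →+ ℤ) (hm : m αj = 2)
    (qj : ℂ) (hqj : qj ≠ 0) (lam : P) :
    ((m lam = 0 → ∀ (f : P → ℂ) (mu : P),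
        Jop αj m (fun ν => f (ν - lam)) mu = Jop αj m f (mu - lam) ∧
        Iop qj αj m (fun ν => f (ν - lam)) mu = Iop qj αj m f (mu - lam)) ∧
     (m lam = 1 → ∀ (f : P → ℂ) (mu : P),
        Jop αj m (fun ν => f (ν - lam)) mu =
          Jop αj m f (mu - (lam - m lam • αj)) + f (mu - lam) ∧
        Iop qj αj m (fun ν => f (ν - lam)) mu =
          Iop qj αj m f (mu - (lam - m lam • αj)) + (qj - qj⁻¹) * f (mu - lam))) := by
  constructor
  · intro h f mu
    have hJ := jop_t0 αj m lam h f mu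
    refine ⟨hJ, ?_⟩
    unfold Iop
    rw [hJ]
    have hmm : m (mu - lam) = m mu := by simp [map_sub, h]
    rw [hmm]
    congr 2
    abel
  · intro h f mu
    have heq : mu - (lam - m lam • αj) = mu - lam + αj := by
      rw [h, one_smul]; abel
    rw [heq]
    have hJ := jop_t1 αj m hm lam h f mu
    refine ⟨hJ, ?_⟩
    unfold Iop
    rw [hJ]
    have hmm : m (mu - lam + αj) = m mu + 1 := by
      simp [map_sub, map_add, h, hm]; ring
    rw [hmm]
    have harg : mu - lam + αj - (m mu + 1) • αj = mu - m mu • αj - lam := by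
      rw [add_smul, one_smul]; abel
    rw [harg]
    ring
end
end
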